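/- (Convolution of generalized Fibonacci numbers.) If a² + 4b ≠ 0, then for every natural number n ≥ 1, Σ_{i=0}^{n} F(i)·F(n−i) = ( (n−1)·F(n+1) + b·(n+1)·F(n−1) ) / (a² + 4b). -/

import Mathlib

/-!
Writing `S n = ∑_{i+j=n} F i F j`, splitting off the end terms and applying the recurrence to the
second factor gives `S (n + 2) = a S (n + 1) + b S n + F (n + 1)`. The right-hand side
`T n = (n - 1) F (n + 1) + b (n + 1) F (n - 1)` satisfies the same inhomogeneous recurrence with
forcing term `(a² + 4b) F (n + 1)`, so `(a² + 4b) S = T` follows by two-step induction.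
-/

noncomputable def genFib (a b : ℝ) : ℕ → ℝ
  | 0 => 0
  | 1 => 1
  | n + 2 => a * genFib a b (n + 1) + b * genFib a b n

open Finset

section

variable (a b : ℝ)

@[simp] lemma genFib_zero : genFib a b 0 = 0 := rfl

@[simp] lemma genFib_one : genFib a b 1 = 1 := rfl

lemma genFib_add_two (n : ℕ) :
    genFib a b (n + 2) = a * genFib a b (n + 1) + b * genFib a b n := rfl

noncomputable def genFibConv (n : ℕ) : ℝ :=
  ∑ p ∈ antidiagonal n, genFib a b p.1 * genFib a b p.2

lemma genFibConv_eq_sum_range (n : ℕ) :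
    genFibConv a b n = ∑ i ∈ range (n + 1), genFib a b i * genFib a b (n - i) :=
  Nat.sum_antidiagonal_eq_sum_range_succ (fun i j ↦ genFib a b i * genFib a b j) n

lemma genFibConv_succ (n : ℕ) :
    genFibConv a b (n + 1) = ∑ p ∈ antidiagonal n, genFib a b p.1 * genFib a b (p.2 + 1) := by
  simp [genFibConv, Nat.sum_antidiagonal_succ']

@[simp] lemma genFibConv_zero : genFibConv a b 0 = 0 := by
  simp [genFibConv]

@[simp] lemma genFibConv_one : genFibConv a b 1 = 0 := by
  simp [genFibConv_succ]

lemma genFibConv_add_two (n : ℕ) :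
    genFibConv a b (n + 2) =
      a * genFibConv a b (n + 1) + b * genFibConv a b n + genFib a b (n + 1) := by
  rw [genFibConv_succ, Nat.sum_antidiagonal_succ', genFibConv_succ, genFibConv, mul_sum, mul_sum]
  simp only [zero_add, genFib_one, mul_one, genFib_add_two, mul_add, sum_add_distrib, mul_left_comm]
  ring

lemma mul_genFibConv_succ (n : ℕ) :
    (a ^ 2 + 4 * b) * genFibConv a b (n + 1) =
      n * genFib a b (n + 2) + b * (n + 2) * genFib a b n := by
  induction n using Nat.twoStepInduction with
  | zero => simp
  | one => simp [genFibConv_add_two, genFib_add_two]; ring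
  | more n ih₀ ih₁ =>
    simp only [add_assoc, Nat.reduceAdd, Nat.cast_add, Nat.cast_one] at ih₁ ⊢
    rw [genFibConv_add_two]
    linear_combination a * ih₁ + b * ih₀ - (n + 2 : ℝ) * genFib_add_two a b (n + 2)
      - a * genFib_add_two a b (n + 1) - b * (n + 2 : ℝ) * genFib_add_two a b n

end

theorem genFib_convolution (a b : ℝ) (hab : a ^ 2 + 4 * b ≠ 0) (n : ℕ) (hn : 1 ≤ n) :
    ∑ i ∈ Finset.range (n + 1), genFib a b i * genFib a b (n - i) =
      (((n : ℝ) - 1) * genFib a b (n + 1) + b * ((n : ℝ) + 1) * genFib a b (n - 1)) /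
        (a ^ 2 + 4 * b) := by
  obtain ⟨m, rfl⟩ := Nat.exists_eq_add_of_le' hn
  rw [← genFibConv_eq_sum_range, eq_div_iff hab, mul_comm, mul_genFibConv_succ]
  rw [Nat.add_sub_cancel]
  push_cast
  ring
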